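/- arXiv:2002.07168 — 4 statements merged into one kernel-verified Lean document; each statement's English description precedes it below -/
import Mathlib

section
/- Let n ≥ 1 and let θ_1, …, θ_n be positive real numbers with θ_1 + ⋯ + θ_n = 2π. Let c ≤ 0 and let U_1, …, U_n be real numbers with U_j ≥ c·θ_j for every j. Set z := −2πc. Then ∑_{j=1}^n min(U_j, z) ≥ min(0, ∑_{j=1}^n U_j). (In particular, if the uncapped potentials around a vertex sum to a nonnegative number, then so do the potentials capped at z.) -/
open Real Finset

/-- Capping the vertex potentials at `z = -2πc` preserves nonnegativity of their sum,
when the angles `θ j` are positive and sum to `2π` and each potential per radian is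
bounded below by `c ≤ 0`. -/
theorem capped_potential_sum
    (n : ℕ) (hn : 1 ≤ n)
    (θ U : Fin n → ℝ)
    (hθpos : ∀ j, 0 < θ j)
    (hθsum : ∑ j, θ j = 2 * π)
    (c : ℝ) (hc : c ≤ 0)
    (hU : ∀ j, c * θ j ≤ U j) :
    min 0 (∑ j, U j) ≤ ∑ j, min (U j) (-(2 * π * c)) := by
  set z : ℝ := -(2 * π * c) with hz
  by_cases h : ∀ j, U j ≤ z
  · have : ∑ j, min (U j) z = ∑ j, U j := by
      exact Finset.sum_congr rfl fun j _ => min_eq_left (h j)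
    rw [this]
    exact min_le_right _ _
  · push_neg at h
    obtain ⟨k, hk⟩ := h
    have key : ∑ j, (c * θ j + if j = k then z - c * θ k else 0)
        ≤ ∑ j, min (U j) z := by
      apply Finset.sum_le_sum
      intro j _
      by_cases hj : j = k
      · subst hj
        have : min (U j) z = z := min_eq_right hk.le
        rw [this]; simp
      · simp only [if_neg hj, add_zero]
        have h1 : c * θ j ≤ 0 := mul_nonpos_of_nonpos_of_nonneg hc (hθpos j).le
        have h2 : 0 ≤ z := by nlinarith [Real.pi_pos]
        exact le_min (hU j) (by linarith)
    have lhs : ∑ j, (c * θ j + if j = k then z - c * θ k else 0)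
        = -(c * θ k) := by
      rw [Finset.sum_add_distrib, ← Finset.mul_sum, hθsum,
        Finset.sum_ite_eq' Finset.univ k (fun _ => z - c * θ k)]
      simp [hz]; ring
    have : (0 : ℝ) ≤ ∑ j, min (U j) z := by
      have h1 : 0 ≤ -(c * θ k) := by nlinarith [(hθpos k).le, hc]
      linarith [key, lhs ▸ key]
    exact le_trans (min_le_left _ _) this
end

section
/- Let A, B, C be affinely independent points of the Euclidean plane ℝ², let T be the (closed) triangle with vertices A, B, C, and let r_A, r_B, r_C ≥ ρ > 0. Suppose that the closed discs of centers A, B, C and radii r_A, r_B, r_C have pairwise disjoint interiors, and that for each vertex the distance from that vertex to the line through the other two vertices is at least the radius of the disc centered at it (i.e. dist(A, line BC) ≥ r_A, dist(B, line AC) ≥ r_B, dist(C, line AB) ≥ r_C). Then the area of T is at least (1/2)πρ². -/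
/-!
The discs have disjoint interiors, so any two vertices are at distance at least `2ρ` and the
three pieces `T ∩ closedBall X ρ` of the triangle `T` overlap only in null sets. Since the
altitude from a vertex `X` is at least `ρ`, the opposite side misses the open `ρ`-disc around `X`,
so the whole circular sector of radius `ρ` and angle `∠X` lies in `T`; its area `∠X * ρ² / 2` is
computed in polar coordinates after moving `X` to `0 ∈ ℂ` by an isometry. The three angles add up
to `π`.
-/

open MeasureTheory Metric Real EuclideanGeometry
open Set ComplexConjugate Module
open scoped EuclideanSpace

theorem Real.sin_nonneg_iff_nonneg {x : ℝ} (h₁ : -π < x) (h₂ : x < π) : 0 ≤ sin x ↔ 0 ≤ x :=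
  ⟨fun h => not_lt.1 fun hx => (sin_neg_of_neg_of_neg_pi_lt hx h₁).not_ge h,
    fun h => sin_nonneg_of_nonneg_of_le_pi h h₂.le⟩

theorem add_le_dist_of_disjoint_interior_closedBall {E : Type*} [NormedAddCommGroup E]
    [NormedSpace ℝ E] {x y : E} {r s : ℝ} (hr : 0 < r) (hs : 0 < s)
    (h : Disjoint (interior (closedBall x r)) (interior (closedBall y s))) :
    r + s ≤ dist x y := by
  rwa [interior_closedBall x hr.ne', interior_closedBall y hs.ne',
    disjoint_ball_ball_iff hr hs] at h

theorem MeasureTheory.Measure.addHaar_closedBall_inter_closedBall_eq_zero {E : Type*}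
    [NormedAddCommGroup E] [NormedSpace ℝ E] [MeasurableSpace E] [BorelSpace E]
    [FiniteDimensional ℝ E] [Nontrivial E]
    (μ : Measure E) [μ.IsAddHaarMeasure] {x y : E} {r s : ℝ} (h : r + s ≤ dist x y) :
    μ (closedBall x r ∩ closedBall y s) = 0 := by
  refine measure_mono_null (fun z ⟨hzx, hzy⟩ => ?_) (Measure.addHaar_sphere μ x r)
  rw [mem_closedBall] at hzx hzy
  rw [Metric.mem_sphere]
  linarith [dist_triangle x z y, dist_comm x z]

theorem measure_add_add_le_of_inter_null {α : Type*} [MeasurableSpace α] {μ : Measure α}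
    {s t u v : Set α} (ht : NullMeasurableSet t μ) (hu : NullMeasurableSet u μ)
    (hst : μ (s ∩ t) = 0) (hsu : μ (s ∩ u) = 0) (htu : μ (t ∩ u) = 0) (h : s ∪ t ∪ u ⊆ v) :
    μ s + μ t + μ u ≤ μ v := by
  rw [← measure_union₀ ht hst, ← measure_union₀ hu (AEDisjoint.union_left hsu htu)]
  exact measure_mono h

theorem mem_convexHull_of_mem_closedBall_of_mem_angle {E : Type*} [NormedAddCommGroup E]
    [NormedSpace ℝ E] {A B C x : E} {ρ a b : ℝ} (hρ : 0 < ρ)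
    (hBC : ∀ y ∈ segment ℝ B C, ρ ≤ dist y A) (ha : 0 ≤ a) (hb : 0 ≤ b)
    (hx : x - A = a • (B - A) + b • (C - A)) (hxA : x ∈ closedBall A ρ) :
    x ∈ convexHull ℝ {A, B, C} := by
  have hA : A ∈ convexHull ℝ {A, B, C} := subset_convexHull ℝ _ (by simp)
  rcases (add_nonneg ha hb).eq_or_lt with hs | hs
  · rw [show a = 0 by linarith, show b = 0 by linarith, zero_smul, zero_smul, add_zero,
      sub_eq_zero] at hx
    rwa [hx]
  set s := a + b
  -- the point where the ray from `A` through `x` meets `[B, C]`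
  set y := (a / s) • B + (b / s) • C
  have hy : y ∈ segment ℝ B C :=
    ⟨a / s, b / s, by positivity, by positivity, by rw [← add_div, div_self hs.ne'], rfl⟩
  have hxy : x - A = s • (y - A) := by
    rw [hx, smul_sub s, smul_add, smul_smul, smul_smul, mul_div_cancel₀ _ hs.ne',
      mul_div_cancel₀ _ hs.ne']
    module
  have hs₁ : s ≤ 1 := by
    have : s * ρ ≤ 1 * ρ := calc
      s * ρ ≤ s * dist y A := by gcongr; exact hBC y hy
      _ = dist x A := by
        rw [dist_eq_norm, dist_eq_norm, hxy, norm_smul, Real.norm_of_nonneg hs.le]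
      _ ≤ 1 * ρ := by rw [one_mul]; exact hxA
    exact le_of_mul_le_mul_right this hρ
  have hyT : y ∈ convexHull ℝ {A, B, C} :=
    (convex_convexHull ℝ _).segment_subset (subset_convexHull ℝ _ (by simp))
      (subset_convexHull ℝ _ (by simp)) hy
  refine (convex_convexHull ℝ _).segment_subset hA hyT
    ⟨1 - s, s, by linarith, hs.le, by ring, ?_⟩
  rw [sub_eq_iff_eq_add'.1 hxy]
  module

theorem AffineIndependent.linearIndependent_vsub_vsub {k V P : Type*} [Ring k] [AddCommGroup V]
    [Module k V] [AddTorsor V P] {p₀ p₁ p₂ : P} (h : AffineIndependent k ![p₀, p₁, p₂]) :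
    LinearIndependent k ![p₁ -ᵥ p₀, p₂ -ᵥ p₀] := by
  rw [affineIndependent_iff_linearIndependent_vsub k _ (0 : Fin 3),
    ← linearIndependent_equiv (finSuccAboveEquiv (0 : Fin 3))] at h
  convert h using 1
  ext i
  fin_cases i <;> rfl

theorem Orientation.kahler_im_ne_zero {E : Type*} [NormedAddCommGroup E]
    [InnerProductSpace ℝ E] [Fact (finrank ℝ E = 2)] (o : Orientation ℝ E (Fin 2)) {u v : E}
    (h : LinearIndependent ℝ ![u, v]) : (o.kahler u v).im ≠ 0 := by
  intro him
  refine o.oangle_eq_zero_or_eq_pi_iff_not_linearIndependent.1 ?_ h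
  rcases le_or_gt 0 (o.kahler u v).re with hre | hre
  · left
    simp [Orientation.oangle, Complex.arg_eq_zero_iff.2 ⟨hre, him⟩]
  · right
    simp [Orientation.oangle, Complex.arg_eq_pi_iff.2 ⟨hre, him⟩]

attribute [local instance] FiniteDimensional.of_fact_finrank_eq_two

theorem exists_linearIsometryEquiv_complex_eq_norm_im_pos {E : Type*} [NormedAddCommGroup E]
    [InnerProductSpace ℝ E] [Fact (finrank ℝ E = 2)] {u v : E}
    (h : LinearIndependent ℝ ![u, v]) :
    ∃ g : E ≃ₗᵢ[ℝ] ℂ, g u = ‖u‖ ∧ 0 < (g v).im := by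
  have hu : u ≠ 0 := h.ne_zero 0
  obtain ⟨o, ho⟩ : ∃ o : Orientation ℝ E (Fin 2), 0 < (o.kahler u v).im := by
    let o₀ : Orientation ℝ E (Fin 2) := (finBasisOfFinrankEq ℝ E Fact.out).orientation
    rcases (o₀.kahler_im_ne_zero h).lt_or_gt with hneg | hpos
    · exact ⟨-o₀, by rw [o₀.kahler_neg_orientation, Complex.conj_im]; linarith⟩
    · exact ⟨o₀, hpos⟩
  -- `o.kahler a y = ⟪a, y⟫ + ω a y • I` are the coordinates of `y` in the positive orthonormal
  -- frame starting at the unit vector `a`.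
  set a := ‖u‖⁻¹ • u
  have ha : ‖a‖ = 1 := by simp [a, norm_smul, hu]
  let g : E →ₗᵢ[ℝ] ℂ := ⟨o.kahler a, fun y => by simp [o.norm_kahler, ha]⟩
  refine ⟨g.toLinearIsometryEquiv (by simp [Fact.out (p := finrank ℝ E = 2)]), ?_, ?_⟩
  all_goals simp only [LinearIsometry.toLinearIsometryEquiv_apply, LinearIsometry.coe_mk, g, a,
    map_smul, LinearMap.smul_apply]
  · rw [o.kahler_apply_self, Complex.real_smul]
    push_cast
    field_simp
  · rw [Complex.smul_im]
    positivity

namespace Complex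

/-- For `0 < c.im`, the closed sector of radius `ρ` swept counterclockwise from the positive real
axis to the ray through `c`. -/
def sector (c : ℂ) (ρ : ℝ) : Set ℂ :=
  {z | ‖z‖ ≤ ρ ∧ 0 ≤ z.im ∧ 0 ≤ (conj z * c).im}

theorem isClosed_sector (c : ℂ) (ρ : ℝ) : IsClosed (sector c ρ) :=
  (isClosed_le continuous_norm continuous_const).inter <|
    (isClosed_le continuous_const continuous_im).inter <|
      isClosed_le continuous_const (continuous_im.comp (continuous_conj.mul continuous_const))

theorem arg_mem_Ioo_of_im_pos {c : ℂ} (hc : 0 < c.im) : arg c ∈ Ioo 0 π :=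
  ⟨(arg_nonneg_iff.2 hc.le).lt_of_ne fun h => hc.ne' (arg_eq_zero_iff.1 h.symm).2,
    arg_lt_pi_iff.2 (Or.inr hc.ne')⟩

theorem polarCoord_symm_mem_sector_iff {c : ℂ} (hc : 0 < c.im) {ρ r φ : ℝ} (hr : 0 < r)
    (hφ : φ ∈ Ioo (-π) π) :
    Complex.polarCoord.symm (r, φ) ∈ sector c ρ ↔ r ≤ ρ ∧ φ ∈ Icc 0 (arg c) := by
  obtain ⟨harg₀, hargπ⟩ := arg_mem_Ioo_of_im_pos hc
  obtain ⟨hφ₁, hφ₂⟩ := hφ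
  have hcross :
      (conj (Complex.polarCoord.symm (r, φ)) * c).im = r * ‖c‖ * Real.sin (arg c - φ) := by
    rw [Real.sin_sub]
    simp [Complex.cos_ofReal_re, Complex.sin_ofReal_re]
    rw [← norm_mul_cos_arg c, ← norm_mul_sin_arg c]
    ring
  have him : (Complex.polarCoord.symm (r, φ)).im = r * Real.sin φ := by
    simp [Complex.sin_ofReal_re]
  have hc₀ : 0 < r * ‖c‖ := mul_pos hr (norm_pos_iff.2 fun h => by simp [h] at hc)
  simp only [sector, mem_ofPred_eq, hcross, him, norm_polarCoord_symm, abs_of_pos hr,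
    mul_nonneg_iff_of_pos_left hr, mul_nonneg_iff_of_pos_left hc₀,
    Real.sin_nonneg_iff_nonneg hφ₁ hφ₂, mem_Icc]
  refine and_congr_right fun _ => ⟨fun ⟨hφ₀, h⟩ => ⟨hφ₀, ?_⟩, fun ⟨hφ₀, h⟩ => ⟨hφ₀, ?_⟩⟩
  · rwa [Real.sin_nonneg_iff_nonneg (by linarith) (by linarith), sub_nonneg] at h
  · rw [Real.sin_nonneg_iff_nonneg (by linarith) (by linarith), sub_nonneg]; exact h

theorem volume_sector {c : ℂ} (hc : 0 < c.im) {ρ : ℝ} (hρ : 0 ≤ ρ) :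
    volume (sector c ρ) = ENNReal.ofReal (arg c * ρ ^ 2 / 2) := by
  obtain ⟨harg₀, hargπ⟩ := arg_mem_Ioo_of_im_pos hc
  set E : Set (ℝ × ℝ) := Ioc 0 ρ ×ˢ Icc 0 (arg c)
  have hE : E ⊆ polarCoord.target := by
    rw [polarCoord_target]
    exact prod_mono Ioc_subset_Ioi_self (Icc_subset_Ioo (by linarith) hargπ)
  have hpolar : ∀ p ∈ polarCoord.target,
      ENNReal.ofReal p.1 • (sector c ρ).indicator 1 (Complex.polarCoord.symm p) =
        E.indicator (fun p => ENNReal.ofReal p.1) p := by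
    rintro ⟨r, φ⟩ ⟨hr : 0 < r, hφ⟩
    simp only [indicator, mem_prod, mem_Ioc, hr, true_and,
      polarCoord_symm_mem_sector_iff hc hr hφ, E]
    split_ifs <;> simp
  calc volume (sector c ρ)
      = ∫⁻ z, (sector c ρ).indicator 1 z :=
        (lintegral_indicator_one (isClosed_sector c ρ).measurableSet).symm
    _ = ∫⁻ p in polarCoord.target,
          ENNReal.ofReal p.1 • (sector c ρ).indicator 1 (Complex.polarCoord.symm p) :=
        (Complex.lintegral_comp_polarCoord_symm _).symm
    _ = ∫⁻ p in E, ENNReal.ofReal p.1 := by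
        rw [setLIntegral_congr_fun polarCoord.open_target.measurableSet hpolar,
          lintegral_indicator (measurableSet_Ioc.prod measurableSet_Icc),
          Measure.restrict_restrict (measurableSet_Ioc.prod measurableSet_Icc),
          inter_eq_left.2 hE]
    _ = (∫⁻ r in Ioc 0 ρ, ENNReal.ofReal r) * volume (Icc 0 (arg c)) := by
        rw [Measure.volume_eq_prod, ← Measure.prod_restrict, ← setLIntegral_one,
          ← lintegral_prod_mul (by fun_prop) aemeasurable_const]
        simp
    _ = ENNReal.ofReal (ρ ^ 2 / 2) * ENNReal.ofReal (arg c) := by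
        have hnonneg : ∀ r ∈ Ioc (0 : ℝ) ρ, 0 ≤ r := fun r hr => hr.1.le
        rw [← ofReal_integral_eq_lintegral_ofReal (f := fun r => r)
            continuous_id.integrableOn_Ioc (ae_restrict_of_forall_mem measurableSet_Ioc hnonneg),
          ← intervalIntegral.integral_of_le hρ, integral_id, Real.volume_Icc]
        ring_nf
    _ = ENNReal.ofReal (arg c * ρ ^ 2 / 2) := by
        rw [← ENNReal.ofReal_mul (by positivity)]
        ring_nf

theorem exists_nonneg_eq_smul_add_smul_of_mem_sector {c z : ℂ} (hc : 0 < c.im) {ρ p : ℝ}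
    (hp : 0 < p) (hz : z ∈ sector c ρ) :
    ∃ a b : ℝ, 0 ≤ a ∧ 0 ≤ b ∧ z = a • (p : ℂ) + b • c := by
  obtain ⟨-, him, hcross⟩ := hz
  refine ⟨(conj z * c).im / (p * c.im), z.im / c.im, by positivity, by positivity, ?_⟩
  apply Complex.ext <;>
    simp only [add_re, add_im, real_smul, mul_re, mul_im, conj_re, conj_im, ofReal_re,
      ofReal_im] <;>
    field_simp <;> ring

end Complex

theorem angle_mul_sq_div_two_le_volume_convexHull_inter_closedBall {E : Type*}
    [NormedAddCommGroup E] [InnerProductSpace ℝ E] [Fact (finrank ℝ E = 2)] [MeasurableSpace E]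
    [BorelSpace E] {A B C : E} {ρ : ℝ} (hρ : 0 < ρ) (hABC : AffineIndependent ℝ ![A, B, C])
    (hA : ρ ≤ infDist A (affineSpan ℝ {B, C})) :
    ENNReal.ofReal (∠ B A C * ρ ^ 2 / 2) ≤ volume (convexHull ℝ {A, B, C} ∩ closedBall A ρ) := by
  obtain ⟨g, hgB, hc⟩ :=
    exists_linearIsometryEquiv_complex_eq_norm_im_pos hABC.linearIndependent_vsub_vsub
  simp only [vsub_eq_sub] at hgB hc
  set c := g (C - A)
  have hp : 0 < ‖B - A‖ :=
    norm_pos_iff.2 (sub_ne_zero.2 (hABC.injective.ne (by decide : (1 : Fin 3) ≠ 0)))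
  have hangle : ∠ B A C = Complex.arg c := by
    rw [EuclideanGeometry.angle, vsub_eq_sub, vsub_eq_sub, ← g.toLinearIsometry.angle_map,
      LinearIsometryEquiv.coe_toLinearIsometry, hgB, ← mul_one (‖B - A‖ : ℂ),
      ← Complex.real_smul, InnerProductGeometry.angle_smul_left_of_pos _ _ hp,
      Complex.angle_one_left fun h => hc.ne' (by simp [c, h]),
      abs_of_pos (Complex.arg_mem_Ioo_of_im_pos hc).1]
  have hBC : ∀ y ∈ segment ℝ B C, ρ ≤ dist y A := fun y hy =>
    hA.trans ((infDist_le_dist_of_mem (mem_segment_iff_wbtw.1 hy).mem_affineSpan).trans_eq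
      (dist_comm A y))
  have hsub : (fun x => g (x - A)) ⁻¹' Complex.sector c ρ ⊆
      convexHull ℝ {A, B, C} ∩ closedBall A ρ := by
    intro x hx
    have hxA : x ∈ closedBall A ρ := by
      rw [mem_closedBall, dist_eq_norm, ← g.norm_map]
      exact hx.1
    obtain ⟨a, b, ha, hb, hab⟩ := Complex.exists_nonneg_eq_smul_add_smul_of_mem_sector hc hp hx
    refine ⟨mem_convexHull_of_mem_closedBall_of_mem_angle hρ hBC ha hb (g.injective ?_) hxA,
      hxA⟩
    rw [map_add, map_smul, map_smul, hgB]
    exact hab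
  calc ENNReal.ofReal (∠ B A C * ρ ^ 2 / 2) = volume (Complex.sector c ρ) := by
        rw [Complex.volume_sector hc hρ.le, hangle]
    _ = volume ((fun x => g (x - A)) ⁻¹' Complex.sector c ρ) :=
        ((g.measurePreserving.comp (measurePreserving_sub_right volume A)).measure_preimage
          (Complex.isClosed_sector c ρ).nullMeasurableSet).symm
    _ ≤ _ := measure_mono hsub

theorem ofReal_pi_mul_sq_div_two_le_sum_volume_inter_closedBall {E : Type*}
    [NormedAddCommGroup E] [InnerProductSpace ℝ E] [Fact (finrank ℝ E = 2)] [MeasurableSpace E]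
    [BorelSpace E] {A B C : E} {ρ : ℝ} (hρ : 0 < ρ) (hABC : AffineIndependent ℝ ![A, B, C])
    (hA : ρ ≤ infDist A (affineSpan ℝ {B, C})) (hB : ρ ≤ infDist B (affineSpan ℝ {A, C}))
    (hC : ρ ≤ infDist C (affineSpan ℝ {A, B})) :
    ENNReal.ofReal (π * ρ ^ 2 / 2) ≤
      volume (convexHull ℝ {A, B, C} ∩ closedBall A ρ) +
        volume (convexHull ℝ {A, B, C} ∩ closedBall B ρ) +
          volume (convexHull ℝ {A, B, C} ∩ closedBall C ρ) := by
  have hsectorA := angle_mul_sq_div_two_le_volume_convexHull_inter_closedBall hρ hABC hA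
  have hsectorB := angle_mul_sq_div_two_le_volume_convexHull_inter_closedBall hρ
    hABC.comm_left hB
  have hsectorC := angle_mul_sq_div_two_le_volume_convexHull_inter_closedBall hρ
    hABC.reverse_of_three.comm_right hC
  rw [insert_comm B A] at hsectorB
  rw [insert_comm C A, pair_comm C B] at hsectorC
  have hangles : ∠ B A C + ∠ A B C + ∠ A C B = π := by
    rw [angle_comm A B C, add_right_comm]
    exact angle_add_angle_add_angle_eq_pi C (hABC.injective.ne (by decide : (0 : Fin 3) ≠ 1))
  have := angle_nonneg B A C
  have := angle_nonneg A B C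
  have := angle_nonneg A C B
  calc ENNReal.ofReal (π * ρ ^ 2 / 2)
      = ENNReal.ofReal (∠ B A C * ρ ^ 2 / 2) + ENNReal.ofReal (∠ A B C * ρ ^ 2 / 2) +
          ENNReal.ofReal (∠ A C B * ρ ^ 2 / 2) := by
        rw [← ENNReal.ofReal_add (by positivity) (by positivity),
          ← ENNReal.ofReal_add (by positivity) (by positivity), ← hangles]
        ring_nf
    _ ≤ _ := by gcongr

/-- If three discs with pairwise disjoint interiors are centered at the vertices of a
triangle, each radius at least `ρ > 0`, and each vertex is at distance at least the
radius of its disc from the line through the other two vertices, then the area of the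
triangle is at least `(1/2)πρ²`. -/
theorem triangle_area_ge_half_small_disc
    (A B C : EuclideanSpace ℝ (Fin 2))
    (hABC : AffineIndependent ℝ ![A, B, C])
    (rA rB rC ρ : ℝ) (hρ : 0 < ρ)
    (hrA : ρ ≤ rA) (hrB : ρ ≤ rB) (hrC : ρ ≤ rC)
    (hAB : Disjoint (interior (closedBall A rA)) (interior (closedBall B rB)))
    (hAC : Disjoint (interior (closedBall A rA)) (interior (closedBall C rC)))
    (hBC : Disjoint (interior (closedBall B rB)) (interior (closedBall C rC)))
    (haltA : rA ≤ infDist A (affineSpan ℝ {B, C} : Set (EuclideanSpace ℝ (Fin 2))))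
    (haltB : rB ≤ infDist B (affineSpan ℝ {A, C} : Set (EuclideanSpace ℝ (Fin 2))))
    (haltC : rC ≤ infDist C (affineSpan ℝ {A, B} : Set (EuclideanSpace ℝ (Fin 2)))) :
    ENNReal.ofReal (π * ρ ^ 2 / 2) ≤ volume (convexHull ℝ {A, B, C}) := by
  set T := convexHull ℝ {A, B, C}
  have hT : MeasurableSet T :=
    ((toFinite {A, B, C}).isCompact_convexHull (𝕜 := ℝ)).isClosed.measurableSet
  have hnull : ∀ {X Y : EuclideanSpace ℝ (Fin 2)} {rX rY : ℝ}, ρ ≤ rX → ρ ≤ rY →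
      Disjoint (interior (closedBall X rX)) (interior (closedBall Y rY)) →
      volume ((T ∩ closedBall X ρ) ∩ (T ∩ closedBall Y ρ)) = 0 := fun hX hY hXY =>
    measure_mono_null (inter_subset_inter inter_subset_right inter_subset_right) <|
      Measure.addHaar_closedBall_inter_closedBall_eq_zero _ <| (add_le_add hX hY).trans <|
        add_le_dist_of_disjoint_interior_closedBall (hρ.trans_le hX) (hρ.trans_le hY) hXY
  calc ENNReal.ofReal (π * ρ ^ 2 / 2)
      ≤ volume (T ∩ closedBall A ρ) + volume (T ∩ closedBall B ρ) +
          volume (T ∩ closedBall C ρ) :=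
        ofReal_pi_mul_sq_div_two_le_sum_volume_inter_closedBall hρ hABC (hrA.trans haltA)
          (hrB.trans haltB) (hrC.trans haltC)
    _ ≤ volume T := measure_add_add_le_of_inter_null
        (hT.inter measurableSet_closedBall).nullMeasurableSet
        (hT.inter measurableSet_closedBall).nullMeasurableSet
        (hnull hrA hrB hAB) (hnull hrA hrC hAC) (hnull hrB hrC hBC)
        (union_subset (union_subset inter_subset_left inter_subset_left) inter_subset_left)
end

section
/- Let r = √2 − 1 and consider the family of closed discs in ℝ² consisting of the discs of radius 1 centered at the points (2m, 2n) for m, n ∈ ℤ, together with the discs of radius r centered at the points (2m+1, 2n+1) for m, n ∈ ℤ. Then (i) these discs have pairwise disjoint interiors (the family is a packing), and (ii) its density limsup_{k→∞} area([−k,k]² ∩ union of the discs)/area([−k,k]²) equals π(2−√2)/2 ≈ 0.9201. -/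
/-!
The centres of any two discs of `P₄` are at least the sum of the radii apart (a large and a small
disc touch, since `1 + (√2 - 1) = √2`), which gives the packing.

`P₄` is the union of the `(2ℤ)²`-translates of the motif formed by the unit disc at `0` and the
small disc at `(1, 1)`, and distinct translates overlap only in null sets. Hence every half-open
square `a + [0, 2)²`, being a fundamental domain of `(2ℤ)²`, meets `P₄` in measure
`π + π (√2 - 1)² = 2π (2 - √2)`. Up to a null set, `[-k, k]²` is the disjoint union of
`k²` such squares, so for every `k ≥ 1` the density quotient equals `2π (2 - √2) / 4`.
-/

open MeasureTheory Filter Metric Real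

/-- The centers of the discs of the periodic compact packing `P₄`:
large discs (radius 1) at points `(2m, 2n)` and small discs (radius `√2 - 1`)
at points `(2m+1, 2n+1)`. -/
noncomputable def P4center : (ℤ × ℤ) ⊕ (ℤ × ℤ) → EuclideanSpace ℝ (Fin 2)
  | Sum.inl (m, n) => !₂[(2 * m : ℝ), (2 * n : ℝ)]
  | Sum.inr (m, n) => !₂[(2 * m + 1 : ℝ), (2 * n + 1 : ℝ)]

/-- The radii of the discs of the packing `P₄`. -/
noncomputable def P4radius : (ℤ × ℤ) ⊕ (ℤ × ℤ) → ℝ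
  | Sum.inl _ => 1
  | Sum.inr _ => Real.sqrt 2 - 1

open Function Set Submodule Pointwise ENNReal

section Balls

variable {E : Type*} [NormedAddCommGroup E] [NormedSpace ℝ E] [Nontrivial E]

theorem disjoint_interior_closedBall_of_add_le_dist {x y : E} {r s : ℝ} (h : r + s ≤ dist x y) :
    Disjoint (interior (closedBall x r)) (interior (closedBall y s)) := by
  rw [interior_closedBall', interior_closedBall']
  exact ball_disjoint_ball h

theorem aedisjoint_closedBall_of_add_le_dist [MeasurableSpace E] [BorelSpace E]
    [FiniteDimensional ℝ E] (μ : Measure E) [μ.IsAddHaarMeasure] {x y : E} {r s : ℝ}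
    (h : r + s ≤ dist x y) : AEDisjoint μ (closedBall x r) (closedBall y s) := by
  refine measure_mono_null (fun z ⟨hzx, hzy⟩ => ?_) (Measure.addHaar_sphere μ x r)
  rw [mem_closedBall] at hzx hzy
  rw [mem_sphere]
  linarith [dist_triangle_left x y z]

end Balls

theorem MeasureTheory.IsAddFundamentalDomain.measure_inter_iUnion_vadd {G α : Type*} [AddGroup G]
    [Countable G] [AddAction G α] [MeasurableSpace α] [MeasurableConstVAdd G α] {μ : Measure α}
    [VAddInvariantMeasure G α μ] {s A : Set α} (hs : IsAddFundamentalDomain G s μ)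
    (hA : NullMeasurableSet A μ) (hdisj : Pairwise (AEDisjoint μ on fun g : G => g +ᵥ A)) :
    μ (s ∩ ⋃ g : G, g +ᵥ A) = μ A := by
  rw [inter_iUnion, measure_iUnion₀
      (hdisj.mono fun _ _ h => h.mono inter_subset_right inter_subset_right)
      fun g => hs.nullMeasurableSet.inter (hA.vadd g), hs.measure_eq_tsum A]
  simp only [inter_comm]

section EvenLattice

variable (ι : Type*) [Fintype ι]

noncomputable def evenBasis : Module.Basis ι ℝ (EuclideanSpace ℝ ι) :=
  (EuclideanSpace.basisFun ι ℝ).toBasis.isUnitSMul fun _ => (two_ne_zero' ℝ).isUnit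

noncomputable def evenLattice : AddSubgroup (EuclideanSpace ℝ ι) :=
  (span ℤ (range (evenBasis ι))).toAddSubgroup

instance : Countable (evenLattice ι) :=
  inferInstanceAs (Countable (span ℤ (range (evenBasis ι))))

variable {ι}

theorem evenBasis_repr_apply (x : EuclideanSpace ℝ ι) (i : ι) :
    (evenBasis ι).repr x i = x i / 2 := by
  simp [evenBasis, Module.Basis.repr_isUnitSMul, Units.smul_def, div_eq_inv_mul]

theorem mem_evenLattice {x : EuclideanSpace ℝ ι} :
    x ∈ evenLattice ι ↔ ∀ i, ∃ m : ℤ, x i = 2 * m := by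
  rw [evenLattice, mem_toAddSubgroup, (evenBasis ι).mem_span_iff_repr_mem ℤ]
  simp only [evenBasis_repr_apply, Set.mem_range, algebraMap_int_eq, eq_intCast]
  refine forall_congr' fun i => exists_congr fun m => ?_
  constructor <;> intro h <;> linarith

end EvenLattice

section Cube

variable {ι : Type*}

def cube (a : EuclideanSpace ℝ ι) : Set (EuclideanSpace ℝ ι) :=
  {x | ∀ i, x i ∈ Ico (a i) (a i + 2)}

variable [Fintype ι]

theorem measurableSet_cube (a : EuclideanSpace ℝ ι) : MeasurableSet (cube a) := by
  simp only [cube, ofPred_forall]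
  exact .iInter fun i => (EuclideanSpace.proj i).continuous.measurable measurableSet_Ico

theorem cube_eq_vadd_fundamentalDomain (a : EuclideanSpace ℝ ι) :
    cube a = a +ᵥ ZSpan.fundamentalDomain (evenBasis ι) := by
  ext x
  rw [mem_vadd_set_iff_neg_vadd_mem]
  simp only [cube, ZSpan.mem_fundamentalDomain, evenBasis_repr_apply, vadd_eq_add, mem_ofPred_eq,
    mem_Ico, PiLp.add_apply, PiLp.neg_apply]
  refine forall_congr' fun i => ?_
  constructor <;> rintro ⟨h1, h2⟩ <;> constructor <;> linarith

theorem isAddFundamentalDomain_cube (a : EuclideanSpace ℝ ι) :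
    IsAddFundamentalDomain (evenLattice ι) (cube a) volume := by
  rw [cube_eq_vadd_fundamentalDomain]
  exact (ZSpan.isAddFundamentalDomain' (evenBasis ι) volume).vadd_of_comm a

end Cube

section Box

variable {ι : Type*}

section

variable (ι)

def box (k : ℝ) : Set (EuclideanSpace ℝ ι) :=
  {x | ∀ i, |x i| ≤ k}

def halfOpenBox (k : ℝ) : Set (EuclideanSpace ℝ ι) :=
  {x | ∀ i, x i ∈ Ico (-k) k}

def boxCorner (k : ℕ) (j : ι → Fin k) : EuclideanSpace ℝ ι :=
  WithLp.toLp 2 fun i => -k + 2 * ((j i : ℕ) : ℤ)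

end

theorem mem_Ico_iff_floor_eq {a t : ℝ} {z : ℤ} :
    t ∈ Ico (a + 2 * z) (a + 2 * z + 2) ↔ ⌊(t - a) / 2⌋ = z := by
  rw [Int.floor_eq_iff, mem_Ico, le_div_iff₀ two_pos, div_lt_iff₀ two_pos]
  constructor <;> rintro ⟨h1, h2⟩ <;> constructor <;> linarith

theorem mem_cube_boxCorner {k : ℕ} {j : ι → Fin k} {x : EuclideanSpace ℝ ι} :
    x ∈ cube (boxCorner ι k j) ↔ ∀ i, ⌊(x i + k) / 2⌋ = (j i : ℕ) := by
  simp only [cube, boxCorner, mem_ofPred_eq, PiLp.toLp_apply, mem_Ico_iff_floor_eq,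
    sub_neg_eq_add]

theorem pairwise_disjoint_cube_boxCorner (k : ℕ) :
    Pairwise (Disjoint on fun j : ι → Fin k => cube (boxCorner ι k j)) := by
  refine fun j j' hne => disjoint_left.2 fun x hx hx' => hne (funext fun i => ?_)
  have := (mem_cube_boxCorner.1 hx i).symm.trans (mem_cube_boxCorner.1 hx' i)
  exact Fin.ext (by exact_mod_cast this)

theorem halfOpenBox_eq_iUnion_cube (k : ℕ) :
    halfOpenBox ι k = ⋃ j : ι → Fin k, cube (boxCorner ι k j) := by
  ext x
  simp only [halfOpenBox, mem_ofPred_eq, mem_iUnion, mem_cube_boxCorner]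
  constructor
  · intro hx
    have hfloor : ∀ i, ∃ j : Fin k, ⌊(x i + k) / 2⌋ = (j : ℕ) := by
      intro i
      obtain ⟨h1, h2⟩ := hx i
      have h0 : 0 ≤ ⌊(x i + k) / 2⌋ := Int.floor_nonneg.2 (by linarith)
      have hk : ⌊(x i + k) / 2⌋ < k := Int.floor_lt.2 (by push_cast; linarith)
      exact ⟨⟨⌊(x i + k) / 2⌋.toNat, by omega⟩, by simp [h0]⟩
    exact Classical.skolem.1 hfloor
  · rintro ⟨j, hj⟩ i
    have h := (mem_Ico_iff_floor_eq (a := -k)).2 ((sub_neg_eq_add (x i) k).symm ▸ hj i)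
    have hjk : ((j i : ℕ) : ℝ) + 1 ≤ k := by exact_mod_cast (j i).isLt
    simp only [Int.cast_natCast, mem_Ico] at h ⊢
    constructor <;> linarith [h.1, h.2, ((j i : ℕ)).cast_nonneg (α := ℝ)]

theorem box_eq_preimage_Icc (k : ℝ) :
    box ι k = WithLp.ofLp ⁻¹' Icc (fun _ => -k) (fun _ => k) := by
  ext x
  simp [box, abs_le, Pi.le_def, forall_and]

variable [Fintype ι]

theorem halfOpenBox_ae_eq_box (k : ℝ) :
    halfOpenBox ι k =ᵐ[volume] box ι k := by
  have hIco : halfOpenBox ι k =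
      WithLp.ofLp ⁻¹' univ.pi fun _ => Ico (-k) k := by
    ext x
    simp [halfOpenBox]
  rw [hIco, box_eq_preimage_Icc]
  exact (PiLp.volume_preserving_ofLp ι).quasiMeasurePreserving.preimage_ae_eq
    Measure.univ_pi_Ico_ae_eq_Icc

theorem volume_box (k : ℝ) :
    volume (box ι k) = ENNReal.ofReal (2 * k) ^ Fintype.card ι := by
  rw [box_eq_preimage_Icc,
    (PiLp.volume_preserving_ofLp ι).measure_preimage measurableSet_Icc.nullMeasurableSet,
    Real.volume_Icc_pi]
  simp [two_mul]

variable {S : Set (EuclideanSpace ℝ ι)} {c : ℝ≥0∞}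

theorem volume_box_inter (hS : ∀ a, volume (cube a ∩ S) = c) (k : ℕ) :
    volume (box ι k ∩ S) = k ^ Fintype.card ι * c := by
  calc volume (box ι k ∩ S)
      = volume.restrict (⋃ j : ι → Fin k, cube (boxCorner ι k j)) S := by
        rw [Measure.restrict_apply' (MeasurableSet.iUnion fun _ => measurableSet_cube _),
          ← halfOpenBox_eq_iUnion_cube, inter_comm S]
        exact measure_congr ((halfOpenBox_ae_eq_box _).symm.inter (ae_eq_refl S))
    _ = ∑' j : ι → Fin k, volume (cube (boxCorner ι k j) ∩ S) := by
        rw [Measure.restrict_iUnion (pairwise_disjoint_cube_boxCorner k)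
          (fun _ => measurableSet_cube _), Measure.sum_apply_of_countable]
        simp only [Measure.restrict_apply' (measurableSet_cube _), inter_comm S]
    _ = k ^ Fintype.card ι * c := by
        simp [hS]

theorem volume_box_inter_div_volume_box (hS : ∀ a, volume (cube a ∩ S) = c) {k : ℕ}
    (hk : k ≠ 0) : volume (box ι k ∩ S) / volume (box ι k) = c / 2 ^ Fintype.card ι := by
  rw [volume_box_inter hS, volume_box, ENNReal.ofReal_mul zero_le_two, ENNReal.ofReal_ofNat,
    ENNReal.ofReal_natCast, mul_pow, mul_comm (2 ^ _),
    ENNReal.mul_div_mul_left _ _ (pow_ne_zero _ (Nat.cast_ne_zero.2 hk))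
      (pow_ne_top (natCast_ne_top k))]

theorem limsup_volume_box_inter_div_volume_box (hS : ∀ a, volume (cube a ∩ S) = c) :
    atTop.limsup (fun k : ℕ => volume (box ι k ∩ S) / volume (box ι k)) =
      c / 2 ^ Fintype.card ι := by
  rw [limsup_congr (eventually_atTop.2 ⟨1, fun k hk =>
    volume_box_inter_div_volume_box hS (Nat.one_le_iff_ne_zero.1 hk)⟩), limsup_const]

end Box

theorem P4center_shift (p : ℤ × ℤ) (i : (ℤ × ℤ) ⊕ (ℤ × ℤ)) :
    P4center (Sum.map (p + ·) (p + ·) i) = P4center (Sum.inl p) + P4center i := by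
  obtain ⟨a, b⟩ := p
  rcases i with ⟨m, n⟩ | ⟨m, n⟩ <;> ext j <;> fin_cases j <;> simp [P4center] <;> ring

theorem P4radius_shift (p : ℤ × ℤ) (i : (ℤ × ℤ) ⊕ (ℤ × ℤ)) :
    P4radius (Sum.map (p + ·) (p + ·) i) = P4radius i := by
  rcases i with _ | _ <;> rfl

theorem dist_sq_eq_fin_two (x y : EuclideanSpace ℝ (Fin 2)) :
    dist x y ^ 2 = (x 0 - y 0) ^ 2 + (x 1 - y 1) ^ 2 := by
  rw [EuclideanSpace.dist_eq, sq_sqrt (by positivity), Fin.sum_univ_two, Real.dist_eq,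
    Real.dist_eq, sq_abs, sq_abs]

theorem one_le_sq_intCast {a : ℤ} (h : a ≠ 0) : (1 : ℝ) ≤ (a : ℝ) ^ 2 := by
  exact_mod_cast (one_le_sq_iff_one_le_abs a).2 (Int.one_le_abs h)

theorem one_le_sq_add_sq_sub_of_ne {p q : ℤ × ℤ} (h : p ≠ q) :
    (1 : ℝ) ≤ ((p.1 - q.1 : ℤ) : ℝ) ^ 2 + ((p.2 - q.2 : ℤ) : ℝ) ^ 2 := by
  obtain h | h : p.1 ≠ q.1 ∨ p.2 ≠ q.2 := by rw [Ne, Prod.ext_iff] at h; tauto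
  · nlinarith [one_le_sq_intCast (sub_ne_zero.2 h)]
  · nlinarith [one_le_sq_intCast (sub_ne_zero.2 h)]

theorem P4radius_add_le_dist {i j : (ℤ × ℤ) ⊕ (ℤ × ℤ)} (hij : i ≠ j) :
    P4radius i + P4radius j ≤ dist (P4center i) (P4center j) := by
  have h2 : sqrt 2 ^ 2 = 2 := sq_sqrt zero_le_two
  have h1 : 1 < sqrt 2 := by rw [lt_sqrt zero_le_one]; norm_num
  suffices (P4radius i + P4radius j) ^ 2 ≤ dist (P4center i) (P4center j) ^ 2 by
    nlinarith [dist_nonneg (x := P4center i) (y := P4center j)]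
  rw [dist_sq_eq_fin_two]
  -- Centres of the same kind differ by `2 • (p - q)` with `p ≠ q`; centres of different kinds
  -- differ by a vector with two odd coordinates.
  rcases i with ⟨m, n⟩ | ⟨m, n⟩ <;> rcases j with ⟨m', n'⟩ | ⟨m', n'⟩ <;>
    simp only [P4center, P4radius, PiLp.toLp_apply, Matrix.cons_val_zero, Matrix.cons_val_one,
      Matrix.cons_val_fin_one]
  · have := one_le_sq_add_sq_sub_of_ne (p := (m, n)) (q := (m', n')) (fun h => hij (h ▸ rfl))
    push_cast at this
    nlinarith
  · have hm := one_le_sq_intCast (a := 2 * (m - m') - 1) (by omega)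
    have hn := one_le_sq_intCast (a := 2 * (n - n') - 1) (by omega)
    push_cast at hm hn
    nlinarith
  · have hm := one_le_sq_intCast (a := 2 * (m - m') + 1) (by omega)
    have hn := one_le_sq_intCast (a := 2 * (n - n') + 1) (by omega)
    push_cast at hm hn
    nlinarith
  · have := one_le_sq_add_sq_sub_of_ne (p := (m, n)) (q := (m', n')) (fun h => hij (h ▸ rfl))
    push_cast at this
    nlinarith

theorem aedisjoint_closedBall_P4center {i j : (ℤ × ℤ) ⊕ (ℤ × ℤ)} (hij : i ≠ j) :
    AEDisjoint volume (closedBall (P4center i) (P4radius i))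
      (closedBall (P4center j) (P4radius j)) :=
  aedisjoint_closedBall_of_add_le_dist volume (P4radius_add_le_dist hij)

theorem P4center_inl_mem_evenLattice (p : ℤ × ℤ) :
    P4center (Sum.inl p) ∈ evenLattice (Fin 2) :=
  mem_evenLattice.2 fun i => by fin_cases i; exacts [⟨p.1, rfl⟩, ⟨p.2, rfl⟩]

noncomputable def P4translation (p : ℤ × ℤ) : evenLattice (Fin 2) :=
  ⟨P4center (Sum.inl p), P4center_inl_mem_evenLattice p⟩

theorem P4translation_surjective : Surjective P4translation := by
  rintro ⟨g, hg⟩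
  obtain ⟨m, hm⟩ := Classical.skolem.1 (mem_evenLattice.1 hg)
  refine ⟨(m 0, m 1), Subtype.ext ?_⟩
  ext i
  fin_cases i <;> simp [P4translation, P4center, hm]

theorem P4translation_vadd_closedBall (p : ℤ × ℤ) (i : (ℤ × ℤ) ⊕ (ℤ × ℤ)) :
    P4translation p +ᵥ closedBall (P4center i) (P4radius i) =
      closedBall (P4center (Sum.map (p + ·) (p + ·) i))
        (P4radius (Sum.map (p + ·) (p + ·) i)) := by
  rw [P4center_shift, P4radius_shift]
  exact vadd_closedBall (P4center (Sum.inl p)) _ _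

noncomputable def P4motif : Set (EuclideanSpace ℝ (Fin 2)) :=
  closedBall (P4center (Sum.inl 0)) (P4radius (Sum.inl 0)) ∪
    closedBall (P4center (Sum.inr 0)) (P4radius (Sum.inr 0))

theorem P4translation_vadd_P4motif (p : ℤ × ℤ) :
    P4translation p +ᵥ P4motif = closedBall (P4center (Sum.inl p)) (P4radius (Sum.inl p)) ∪
      closedBall (P4center (Sum.inr p)) (P4radius (Sum.inr p)) := by
  simp only [P4motif, vadd_set_union, P4translation_vadd_closedBall, Sum.map_inl, Sum.map_inr,
    add_zero]

theorem iUnion_closedBall_P4center_eq_iUnion_vadd_P4motif :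
    ⋃ i, closedBall (P4center i) (P4radius i) = ⋃ g : evenLattice (Fin 2), g +ᵥ P4motif := by
  rw [← P4translation_surjective.iUnion_comp, iUnion_sum, ← iUnion_union_distrib]
  simp only [P4translation_vadd_P4motif]

theorem pairwise_aedisjoint_vadd_P4motif :
    Pairwise (AEDisjoint volume on fun g : evenLattice (Fin 2) => g +ᵥ P4motif) := by
  intro g g' hne
  obtain ⟨p, rfl⟩ := P4translation_surjective g
  obtain ⟨p', rfl⟩ := P4translation_surjective g'
  have hp : p ≠ p' := fun h => hne (h ▸ rfl)
  simp only [onFun, P4translation_vadd_P4motif]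
  exact .union_left
    (.union_right (aedisjoint_closedBall_P4center (by simpa))
      (aedisjoint_closedBall_P4center (by simp)))
    (.union_right (aedisjoint_closedBall_P4center (by simp))
      (aedisjoint_closedBall_P4center (by simpa)))

theorem volume_P4motif : volume P4motif = ENNReal.ofReal (2 * π * (2 - sqrt 2)) := by
  rw [P4motif, measure_union₀ measurableSet_closedBall.nullMeasurableSet
    (aedisjoint_closedBall_P4center (by simp)), EuclideanSpace.volume_closedBall_fin_two,
    EuclideanSpace.volume_closedBall_fin_two]
  have hr : 0 ≤ sqrt 2 - 1 := by
    rw [sub_nonneg, one_le_sqrt]; norm_num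
  rw [P4radius, P4radius, ← ENNReal.ofReal_pow zero_le_one, ← ENNReal.ofReal_pow hr,
    ← ENNReal.ofReal_mul (by positivity), ← ENNReal.ofReal_mul (by positivity),
    ← ENNReal.ofReal_add (by positivity) (by positivity)]
  congr 1
  linear_combination π * sq_sqrt (zero_le_two (α := ℝ))

theorem volume_cube_inter_iUnion_closedBall_P4center (a : EuclideanSpace ℝ (Fin 2)) :
    volume (cube a ∩ ⋃ i, closedBall (P4center i) (P4radius i)) = volume P4motif := by
  rw [iUnion_closedBall_P4center_eq_iUnion_vadd_P4motif]
  exact (isAddFundamentalDomain_cube a).measure_inter_iUnion_vadd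
    (measurableSet_closedBall.union measurableSet_closedBall).nullMeasurableSet
    pairwise_aedisjoint_vadd_P4motif

/-- The family `P₄` of unit discs centered at `(2m, 2n)` and discs of radius `√2 - 1`
centered at `(2m+1, 2n+1)` is a packing (pairwise disjoint interiors) and its density
is `π(2-√2)/2`. -/
theorem P4_is_packing_with_density :
    (Pairwise fun i j =>
      Disjoint (interior (closedBall (P4center i) (P4radius i)))
        (interior (closedBall (P4center j) (P4radius j)))) ∧
    Filter.atTop.limsup (fun k : ℕ =>
      volume ({x : EuclideanSpace ℝ (Fin 2) | ∀ i, |x i| ≤ (k : ℝ)} ∩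
        ⋃ i, closedBall (P4center i) (P4radius i)) /
      volume {x : EuclideanSpace ℝ (Fin 2) | ∀ i, |x i| ≤ (k : ℝ)}) =
    ENNReal.ofReal (π * (2 - Real.sqrt 2) / 2) := by
  refine ⟨fun _ _ hij => disjoint_interior_closedBall_of_add_le_dist (P4radius_add_le_dist hij),
    (limsup_volume_box_inter_div_volume_box
      volume_cube_inter_iUnion_closedBall_P4center).trans ?_⟩
  rw [volume_P4motif, Fintype.card_fin,
    show π * (2 - sqrt 2) / 2 = 2 * π * (2 - sqrt 2) / 2 ^ 2 by ring,
    ENNReal.ofReal_div_of_pos (by positivity), ENNReal.ofReal_pow zero_le_two, ENNReal.ofReal_ofNat]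
end

section
/- Define f : (−∞, 1) → ℝ by f(x) = (2/x)(1 − √(1 − x)) for x ≠ 0 and f(0) = 1. Then for every x ≤ 0.78 with x ≠ 0 one has min(1, 1 + x) ≤ f(x) ≤ max(1, 1 + x); equivalently, 1 ≤ f(x) ≤ 1 + x for 0 < x ≤ 0.78, and 1 + x ≤ f(x) ≤ 1 for x < 0. -/
open Real

/-- The estimate of Appendix B: the function `f(x) = (2/x)(1 − √(1 − x))`
(extended by `f(0) = 1`) satisfies `min(1, 1+x) ≤ f(x) ≤ max(1, 1+x)` for every
nonzero `x ≤ 0.78`. -/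
theorem support_disc_root_estimate
    (f : ℝ → ℝ)
    (hf : ∀ x : ℝ, x ≠ 0 → f x = 2 / x * (1 - Real.sqrt (1 - x)))
    (hf0 : f 0 = 1) :
    ∀ x : ℝ, x ≤ 0.78 → x ≠ 0 →
      min 1 (1 + x) ≤ f x ∧ f x ≤ max 1 (1 + x) := by
  intro x hx hx0
  have h1x : (0:ℝ) < 1 - x := by linarith
  set s := Real.sqrt (1 - x) with hs
  have hs0 : 0 ≤ s := Real.sqrt_nonneg _
  have hs2 : s ^ 2 = 1 - x := Real.sq_sqrt h1x.le
  have h1s : (0:ℝ) < 1 + s := by linarith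
  have hfx : f x = 2 / (1 + s) := by
    rw [hf x hx0]
    rw [div_mul_eq_mul_div, div_eq_div_iff hx0 h1s.ne']
    nlinarith [hs2]
  rcases lt_or_gt_of_ne hx0 with hneg | hpos
  · have hs1 : 1 ≤ s := by nlinarith
    rw [min_eq_right (by linarith : (1:ℝ) + x ≤ 1),
        max_eq_left (by linarith : (1:ℝ) + x ≤ 1), hfx]
    constructor
    · rw [le_div_iff₀ h1s]; nlinarith
    · rw [div_le_one h1s]; linarith
  · have hs1 : s ≤ 1 := by nlinarith
    rw [min_eq_left (by linarith : (1:ℝ) ≤ 1 + x),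
        max_eq_right (by linarith : (1:ℝ) ≤ 1 + x), hfx]
    constructor
    · rw [le_div_iff₀ h1s]; linarith
    · rw [div_le_iff₀ h1s]; nlinarith
end
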